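/- Let f : ℝⁿ → ℝ be differentiable, μ-strongly convex, and L-smooth with minimizer x*. If a sequence {xᵏ} satisfies f(xᵏ⁺¹) ≤ f(xᵏ - (1/L)∇f(xᵏ)) for all k, then f(xᵏ) - f(x*) ≤ (1 - μ/L)^(k-1) (f(x¹) - f(x*)) for all k ≥ 1. -/

import Mathlib

/-!
Since the gradient is `L`-Lipschitz, the derivative of `t ↦ f (a + t v) - t ⟪∇f a, v⟫` is at most
`L t ‖v‖²` for `t ≥ 0`, which gives the descent lemma: the step `x - (1/L) ∇f x` lowers `f` by at least
`‖∇f x‖² / (2L)`. Minimizing the strong-convexity lower bound over `y` gives the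
Polyak–Łojasiewicz inequality `2μ (f x - f y) ≤ ‖∇f x‖²`. Together they contract the optimality
gap by the factor `1 - μ/L` at every step.
-/

open RealInnerProductSpace

section

variable {E : Type*} [NormedAddCommGroup E] [InnerProductSpace ℝ E]

lemma HasGradientAt.hasDerivAt_comp_add_smul [CompleteSpace E] {f : E → ℝ} {f' a v : E} {t : ℝ}
    (hf : HasGradientAt f f' (a + t • v)) :
    HasDerivAt (fun s : ℝ => f (a + s • v)) ⟪f', v⟫ t := by
  have hline : HasDerivAt (fun s : ℝ => a + s • v) v t := by
    simpa using ((hasDerivAt_id t).smul_const v).const_add a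
  simpa [Function.comp_def] using hf.hasFDerivAt.comp_hasDerivAt t hline

lemma inner_sub_le_mul_norm_sq_of_lipschitz {g : E → E} {L : ℝ}
    (hg : ∀ x y, ‖g x - g y‖ ≤ L * ‖x - y‖) (a v : E) {t : ℝ} (ht : 0 ≤ t) :
    ⟪g (a + t • v), v⟫ - ⟪g a, v⟫ ≤ L * t * ‖v‖ ^ 2 :=
  calc ⟪g (a + t • v), v⟫ - ⟪g a, v⟫ = ⟪g (a + t • v) - g a, v⟫ := (inner_sub_left ..).symm
    _ ≤ ‖g (a + t • v) - g a‖ * ‖v‖ := real_inner_le_norm _ _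
    _ ≤ L * ‖t • v‖ * ‖v‖ := by
        gcongr
        simpa using hg (a + t • v) a
    _ = L * t * ‖v‖ ^ 2 := by rw [norm_smul, Real.norm_of_nonneg ht]; ring

lemma le_add_inner_add_of_lipschitz_gradient [CompleteSpace E] {f : E → ℝ} {g : E → E} {L : ℝ}
    (hf : ∀ x, HasGradientAt f (g x) x) (hg : ∀ x y, ‖g x - g y‖ ≤ L * ‖x - y‖) (a v : E) :
    f (a + v) ≤ f a + ⟪g a, v⟫ + L / 2 * ‖v‖ ^ 2 := by
  set φ : ℝ → ℝ := fun t => f (a + t • v) - t * ⟪g a, v⟫ - L / 2 * t ^ 2 * ‖v‖ ^ 2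
  have hφ' : ∀ t, HasDerivAt φ (⟪g (a + t • v), v⟫ - ⟪g a, v⟫ - L * t * ‖v‖ ^ 2) t := by
    intro t
    have hline := (hf (a + t • v)).hasDerivAt_comp_add_smul (a := a) (v := v)
    exact ((hline.sub ((hasDerivAt_id t).mul_const ⟪g a, v⟫)).sub
      (((hasDerivAt_pow 2 t).const_mul (L / 2)).mul_const (‖v‖ ^ 2))).congr_deriv (by ring)
  have hanti : AntitoneOn φ (Set.Ici 0) :=
    antitoneOn_of_hasDerivWithinAt_nonpos (convex_Ici 0)
      (fun t _ => (hφ' t).continuousAt.continuousWithinAt)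
      (fun t _ => (hφ' t).hasDerivWithinAt)
      (fun t ht => by
        rw [interior_Ici] at ht
        linarith [inner_sub_le_mul_norm_sq_of_lipschitz hg a v ht.le])
  have h01 : φ 1 ≤ φ 0 := hanti Set.self_mem_Ici (Set.mem_Ici.mpr zero_le_one) zero_le_one
  simp only [φ, zero_smul, one_smul, add_zero, zero_mul, one_mul, ne_eq, OfNat.ofNat_ne_zero,
    not_false_eq_true, zero_pow, one_pow, mul_zero, mul_one, sub_zero] at h01
  linarith

lemma le_sub_norm_sq_div_of_lipschitz_gradient [CompleteSpace E] {f : E → ℝ} {g : E → E} {L : ℝ}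
    (hf : ∀ x, HasGradientAt f (g x) x) (hg : ∀ x y, ‖g x - g y‖ ≤ L * ‖x - y‖) (a : E) :
    f (a - (1 / L) • g a) ≤ f a - ‖g a‖ ^ 2 / (2 * L) := by
  rcases eq_or_ne L 0 with rfl | hL
  · simp
  have hdescent := le_add_inner_add_of_lipschitz_gradient hf hg a (-((1 / L) • g a))
  rw [← sub_eq_add_neg, inner_neg_right, real_inner_smul_right, real_inner_self_eq_norm_sq,
    norm_neg, norm_smul, mul_pow, Real.norm_eq_abs, sq_abs] at hdescent
  convert hdescent using 1
  field_simp
  ring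

/-- For `p = f a`, `q = f y`, `v = ∇f a`, `w = y - a` this is the Polyak–Łojasiewicz inequality. -/
lemma two_mul_mul_sub_le_norm_sq {μ p q : ℝ} {v w : E} (hμ : 0 ≤ μ)
    (h : q ≥ p + ⟪v, w⟫ + μ / 2 * ‖w‖ ^ 2) :
    2 * μ * (p - q) ≤ ‖v‖ ^ 2 := by
  nlinarith [neg_abs_le ⟪v, w⟫, abs_real_inner_le_norm v w, sq_nonneg (μ * ‖w‖ - ‖v‖)]

end

lemma le_pow_mul_of_le_mul {α : Type*} [Semiring α] [PartialOrder α] [IsOrderedRing α]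
    {u : ℕ → α} {q : α} (hq : 0 ≤ q) (hu : ∀ k, u (k + 1) ≤ q * u k) :
    ∀ k, u k ≤ q ^ k * u 0
  | 0 => by simp
  | k + 1 =>
    calc u (k + 1) ≤ q * u k := hu k
      _ ≤ q * (q ^ k * u 0) := mul_le_mul_of_nonneg_left (le_pow_mul_of_le_mul hq hu k) hq
      _ = q ^ (k + 1) * u 0 := by rw [pow_succ', mul_assoc]

theorem stmt_8_general {n : ℕ} (f : EuclideanSpace ℝ (Fin n) → ℝ)
    (g : EuclideanSpace ℝ (Fin n) → EuclideanSpace ℝ (Fin n)) (μ L : ℝ)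
    (hμ : 0 < μ) (hμL : μ ≤ L)
    (hgrad : ∀ x, HasGradientAt f (g x) x)
    (hsc : ∀ x y : EuclideanSpace ℝ (Fin n),
      f y ≥ f x + ⟪g x, y - x⟫ + μ / 2 * ‖y - x‖ ^ 2)
    (hsmooth : ∀ x y : EuclideanSpace ℝ (Fin n), ‖g x - g y‖ ≤ L * ‖x - y‖)
    (xs : EuclideanSpace ℝ (Fin n))
    (x : ℕ → EuclideanSpace ℝ (Fin n))
    (hstep : ∀ k : ℕ, f (x (k + 1)) ≤ f (x k - (1 / L) • g (x k))) :
    ∀ k : ℕ, 1 ≤ k →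
      f (x k) - f xs ≤ (1 - μ / L) ^ (k - 1) * (f (x 1) - f xs) := by
  have hL : 0 < L := hμ.trans_le hμL
  have hcontract : ∀ k, f (x (k + 1)) - f xs ≤ (1 - μ / L) * (f (x k) - f xs) := by
    intro k
    have hdescent := (hstep k).trans (le_sub_norm_sq_div_of_lipschitz_gradient hgrad hsmooth (x k))
    have hPL := two_mul_mul_sub_le_norm_sq hμ.le (hsc (x k) xs)
    calc f (x (k + 1)) - f xs ≤ (f (x k) - f xs) - ‖g (x k)‖ ^ 2 / (2 * L) := by linarith
      _ ≤ (f (x k) - f xs) - 2 * μ * (f (x k) - f xs) / (2 * L) := by gcongr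
      _ = (1 - μ / L) * (f (x k) - f xs) := by field_simp
  have hrate : 0 ≤ 1 - μ / L := sub_nonneg.mpr ((div_le_one hL).mpr hμL)
  intro k hk
  obtain ⟨m, rfl⟩ := Nat.exists_eq_add_of_le' hk
  simpa using le_pow_mul_of_le_mul (u := fun m => f (x (m + 1)) - f xs) hrate
    (fun m => hcontract (m + 1)) m

/-- Linear convergence at rate 1 - μ/L for any method dominating a 1/L gradient step. -/
theorem stmt_8 {n : ℕ} (f : EuclideanSpace ℝ (Fin n) → ℝ)
    (g : EuclideanSpace ℝ (Fin n) → EuclideanSpace ℝ (Fin n)) (μ L : ℝ)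
    (hμ : 0 < μ) (hμL : μ ≤ L)
    (hgrad : ∀ x, HasGradientAt f (g x) x)
    (hsc : ∀ x y : EuclideanSpace ℝ (Fin n),
      f y ≥ f x + ⟪g x, y - x⟫ + μ / 2 * ‖y - x‖ ^ 2)
    (hsmooth : ∀ x y : EuclideanSpace ℝ (Fin n), ‖g x - g y‖ ≤ L * ‖x - y‖)
    (xs : EuclideanSpace ℝ (Fin n)) (hmin : ∀ y, f xs ≤ f y)
    (x : ℕ → EuclideanSpace ℝ (Fin n))
    (hstep : ∀ k : ℕ, f (x (k + 1)) ≤ f (x k - (1 / L) • g (x k))) :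
    ∀ k : ℕ, 1 ≤ k →
      f (x k) - f xs ≤ (1 - μ / L) ^ (k - 1) * (f (x 1) - f xs) :=
  stmt_8_general f g μ L hμ hμL hgrad hsc hsmooth xs x hstep
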